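/- Let R be a left commutative rng with left identity 1ℓ. Then R decomposes as a direct sum of abelian groups R = R₀ ⊕ R₁, where R₀ := R·1ℓ and R₁ := ℏ⁺(R); explicitly, every a ∈ R can be written uniquely as a = a₀ + a₁ with a₀ = a·1ℓ ∈ R₀ and a₁ = a − a·1ℓ ∈ R₁. -/

import Mathlib

universe u

/-- A left commutative rng: an associative rng with `x*y*z = y*x*z`, a fixed left
identity `e = 1ℓ`, whose additive halo `{x : x*e = 0}` is a commutative unital ring
under a local product `sharp` with local identity `ls = 1♯`, satisfying the local
strong Hu-Liu triassociative law. -/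
structure LeftCommRng (R : Type u) [NonUnitalRing R] where
  e : R
  sharp : R → R → R
  ls : R
  left_comm : ∀ x y z : R, x * y * z = y * x * z
  e_mul : ∀ x : R, e * x = x
  ls_halo : ls * e = 0
  sharp_halo : ∀ a b : R, a * e = 0 → b * e = 0 → sharp a b * e = 0
  sharp_assoc : ∀ a b c : R, a * e = 0 → b * e = 0 → c * e = 0 →
    sharp (sharp a b) c = sharp a (sharp b c)
  sharp_comm : ∀ a b : R, a * e = 0 → b * e = 0 → sharp a b = sharp b a
  sharp_add : ∀ a b c : R, a * e = 0 → b * e = 0 → c * e = 0 →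
    sharp a (b + c) = sharp a b + sharp a c
  sharp_ls : ∀ a : R, a * e = 0 → sharp ls a = a
  triassoc : ∀ (x a b : R), a * e = 0 → b * e = 0 →
    sharp (x * a) b = x * sharp a b

/-- The commutative product `x •_{1ℓ} y := xy + yx − (yx)·1ℓ`. -/
def LeftCommRng.bullet {R : Type u} [NonUnitalRing R] (L : LeftCommRng R) (x y : R) : R :=
  x * y + y * x - y * x * L.e

/-- A left commutative subrng `S` of the ambient left commutative rng. -/
structure IsLCSubrng {U : Type u} [NonUnitalRing U] (L : LeftCommRng U) (S : Set U) : Prop where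
  e_mem : L.e ∈ S
  ls_mem : L.ls ∈ S
  add_mem : ∀ {a b : U}, a ∈ S → b ∈ S → a + b ∈ S
  neg_mem : ∀ {a : U}, a ∈ S → -a ∈ S
  mul_mem : ∀ {a b : U}, a ∈ S → b ∈ S → a * b ∈ S
  sharp_mem : ∀ {a b : U}, a ∈ S → b ∈ S → a * L.e = 0 → b * L.e = 0 → L.sharp a b ∈ S

/-- An ideal `J` of the left commutative (sub)rng `S` (take `S = Set.univ` for an
ideal of the whole rng): an additive subgroup absorbing multiplication by `S` on
both sides, whose halo part is a `♯`-ideal. -/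
structure IsLCIdealIn {U : Type u} [NonUnitalRing U] (L : LeftCommRng U) (S J : Set U) : Prop where
  subset : J ⊆ S
  zero_mem : (0 : U) ∈ J
  add_mem : ∀ {a b : U}, a ∈ J → b ∈ J → a + b ∈ J
  neg_mem : ∀ {a : U}, a ∈ J → -a ∈ J
  mul_right : ∀ {a : U}, a ∈ J → ∀ r ∈ S, a * r ∈ J
  mul_left : ∀ {a : U}, a ∈ J → ∀ r ∈ S, r * a ∈ J
  sharp_mem : ∀ {a : U}, a ∈ J → a * L.e = 0 → ∀ b ∈ S, b * L.e = 0 → L.sharp a b ∈ J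

/-- A Hu-Liu prime ideal `p` of the left commutative (sub)rng `S`. -/
structure IsHLPrimeIn {U : Type u} [NonUnitalRing U] (L : LeftCommRng U) (S p : Set U)
    extends IsLCIdealIn L S p : Prop where
  ne_top : p ≠ S
  prime00 : ∀ x ∈ S, ∀ y ∈ S, x * L.e = x → y * L.e = y → x * y ∈ p → x ∈ p ∨ y ∈ p
  prime01 : ∀ x ∈ S, ∀ y ∈ S, x * L.e = x → y * L.e = 0 → x * y ∈ p → x ∈ p ∨ y ∈ p
  prime11 : ∀ x ∈ S, ∀ y ∈ S, x * L.e = 0 → y * L.e = 0 → L.sharp x y ∈ p → x ∈ p ∨ y ∈ p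

/-- `pw e x n` is `xⁿ` (with the convention `pw e x 0 = e`, the left identity). -/
def pw {R : Type u} [NonUnitalRing R] (e x : R) : ℕ → R
  | 0 => e
  | n + 1 => x * pw e x n

/-- `spow L u n` is the `n`-th `♯`-power `u^{♯n}` (with `spow L u 0 = 1♯`). -/
def LeftCommRng.spow {R : Type u} [NonUnitalRing R] (L : LeftCommRng R) (u : R) : ℕ → R
  | 0 => L.ls
  | n + 1 => L.sharp u (L.spow u n)

/-- `u` is integral over `R₀ = R·1ℓ` inside `(U₀, ·)`. -/
def Integral0 {U : Type u} [NonUnitalRing U] (L : LeftCommRng U) (R : Set U) (u : U) : Prop :=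
  ∃ n : ℕ, 1 ≤ n ∧ ∃ a : ℕ → U, (∀ i, a i ∈ R ∧ a i * L.e = a i) ∧
    pw L.e u n + ∑ i ∈ Finset.range n, a i * pw L.e u (n - 1 - i) = 0

/-- `u` is integral over `(R₁, ♯)` inside `(U₁, ♯)`. -/
def Integral1 {U : Type u} [NonUnitalRing U] (L : LeftCommRng U) (R : Set U) (u : U) : Prop :=
  ∃ n : ℕ, 1 ≤ n ∧ ∃ a : ℕ → U, (∀ i, a i ∈ R ∧ a i * L.e = 0) ∧
    L.spow u n + ∑ i ∈ Finset.range n, L.sharp (a i) (L.spow u (n - 1 - i)) = 0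

/-- `U` is graded integral over the subrng `R`. -/
def GradedIntegral {U : Type u} [NonUnitalRing U] (L : LeftCommRng U) (R : Set U) : Prop :=
  ∀ u : U, Integral0 L R (u * L.e) ∧ Integral1 L R (u - u * L.e)

/-!
Right multiplication by `1ℓ` is an idempotent additive endomorphism, since
`x·1ℓ·1ℓ = 1ℓ·x·1ℓ = x·1ℓ` by left commutativity; so `R` is the direct sum of its image `R₀`
and its kernel `ℏ⁺(R)`.
-/

namespace LeftCommRng

variable {R : Type u} [NonUnitalRing R] (L : LeftCommRng R)

theorem mul_e_mul_e (x : R) : x * L.e * L.e = x * L.e := by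
  rw [L.left_comm x L.e L.e, L.e_mul]

theorem sub_mul_e_mul_e (x : R) : (x - x * L.e) * L.e = 0 := by
  rw [sub_mul, L.mul_e_mul_e, sub_self]

theorem add_mul_e_of_mul_e {b c : R} (hb : b * L.e = b) (hc : c * L.e = 0) :
    (b + c) * L.e = b := by
  rw [add_mul, hb, hc, add_zero]

end LeftCommRng

/-- `R = R₀ ⊕ R₁` as abelian groups, with `R₀ = R·1ℓ = {x : x·1ℓ = x}` and
`R₁ = ℏ⁺(R)`; every `a` is uniquely `a₀ + a₁` with `a₀ = a·1ℓ`, `a₁ = a − a·1ℓ`. -/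
theorem grading_decomposition {R : Type u} [NonUnitalRing R] (L : LeftCommRng R) :
    ∀ a : R,
      (a * L.e) * L.e = a * L.e ∧
      (a - a * L.e) * L.e = 0 ∧
      a = a * L.e + (a - a * L.e) ∧
      (∀ b c : R, b * L.e = b → c * L.e = 0 → a = b + c →
        b = a * L.e ∧ c = a - a * L.e) := by
  intro a
  refine ⟨L.mul_e_mul_e a, L.sub_mul_e_mul_e a, (add_sub_cancel _ _).symm, ?_⟩
  rintro b c hb hc rfl
  have hb' : b = (b + c) * L.e := (L.add_mul_e_of_mul_e hb hc).symm
  exact ⟨hb', by rw [← hb', add_sub_cancel_left]⟩
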